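/- arXiv:2502.11784 — 9 statements merged into one kernel-verified Lean document; each statement's English description precedes it below -/
import Mathlib

section
/- For a unitary U, the Kirkwood-Dirac superoperator of U† is the inverse of that of U, and its entries satisfy (Ê_{U†})_{ij,kl} = |⟨b_j|a_i⟩/⟨b_l|a_k⟩|² · conj((Ê_U)_{kl,ij}). -/
/-!
With `c (i, j) = ⟨b_j|a_i⟩` and `D = diagonal c`, the superoperator factors as
`Ê_U = D (U_a ⊗ₖ (U†_b)ᵀ) D⁻¹`, where `U_a`, `U_b` are the matrices of `U` in the bases `a`, `b`.
Both Kronecker factors are multiplicative in `U` (the transpose undoes the order reversal of the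
adjoint), so `U ↦ Ê_U` is a unital multiplicative map as soon as `D` is invertible, and
`Ê_{U†} Ê_U = Ê_{U†U} = 1`. The entry formula is conjugate symmetry of the inner product together
with `|z|² conj z⁻¹ = z`.
-/

open Matrix LinearMap ComplexConjugate
open scoped InnerProductSpace Kronecker

theorem Matrix.diagonal_similarity_mul {n K : Type*} [Fintype n] [DecidableEq n]
    [Field K] {c : n → K} (hc : ∀ i, c i ≠ 0) (M N : Matrix n n K) :
    diagonal c * (M * N) * diagonal c⁻¹
      = diagonal c * M * diagonal c⁻¹ * (diagonal c * N * diagonal c⁻¹) := by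
  have hinv : diagonal c⁻¹ * diagonal c = 1 := by
    rw [diagonal_mul_diagonal, ← diagonal_one]
    exact congrArg diagonal (funext fun i => inv_mul_cancel₀ (hc i))
  simp only [Matrix.mul_assoc, ← Matrix.mul_assoc (diagonal c⁻¹), hinv, Matrix.one_mul]

theorem Matrix.diagonal_similarity_one {n K : Type*} [Fintype n] [DecidableEq n]
    [Field K] {c : n → K} (hc : ∀ i, c i ≠ 0) :
    diagonal c * 1 * diagonal c⁻¹ = 1 := by
  rw [Matrix.mul_one, diagonal_mul_diagonal, ← diagonal_one]
  exact congrArg diagonal (funext fun i => mul_inv_cancel₀ (hc i))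

theorem Complex.ofReal_norm_sq_mul_conj_inv (z : ℂ) : (‖z‖ : ℂ) ^ 2 * conj z⁻¹ = z := by
  rcases eq_or_ne z 0 with rfl | hz
  · simp
  · rw [map_inv₀, ← Complex.mul_conj', mul_inv_cancel_right₀ ((map_ne_zero _).mpr hz)]

section KirkwoodDirac

variable {ι E : Type*} [Fintype ι] [NormedAddCommGroup E] [InnerProductSpace ℂ E]
  [FiniteDimensional ℂ E] (a b : OrthonormalBasis ι ℂ E)

noncomputable def kdOverlap (p : ι × ι) : ℂ := ⟪b p.2, a p.1⟫_ℂ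

noncomputable def kdSuperoperator (U : E →ₗ[ℂ] E) : Matrix (ι × ι) (ι × ι) ℂ :=
  of fun p q => kdOverlap a b p / kdOverlap a b q * ⟪a p.1, U (a q.1)⟫_ℂ *
    ⟪b q.2, adjoint U (b p.2)⟫_ℂ

theorem kdSuperoperator_eq_diagonal_mul_kronecker [DecidableEq ι] (U : E →ₗ[ℂ] E) :
    kdSuperoperator a b U = diagonal (kdOverlap a b) *
      (toMatrixOrthonormal a U ⊗ₖ (toMatrixOrthonormal b (adjoint U))ᵀ) *
        diagonal (kdOverlap a b)⁻¹ := by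
  ext p q
  simp only [kdSuperoperator, of_apply, mul_diagonal, diagonal_mul, kroneckerMap_apply,
    transpose_apply, toMatrixOrthonormal_apply_apply, Pi.inv_apply, div_eq_mul_inv]
  ring

variable {a b}

theorem kdSuperoperator_mul [DecidableEq ι] (hab : ∀ i j, ⟪b j, a i⟫_ℂ ≠ 0) (U V : E →ₗ[ℂ] E) :
    kdSuperoperator a b (U * V) = kdSuperoperator a b U * kdSuperoperator a b V := by
  rw [kdSuperoperator_eq_diagonal_mul_kronecker, kdSuperoperator_eq_diagonal_mul_kronecker,
    kdSuperoperator_eq_diagonal_mul_kronecker]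
  have hadj : adjoint (U * V) = adjoint V * adjoint U := adjoint_comp U V
  rw [hadj, map_mul, map_mul, transpose_mul, mul_kronecker_mul]
  exact diagonal_similarity_mul (c := kdOverlap a b) (fun p => hab p.1 p.2) _ _

theorem kdSuperoperator_one [DecidableEq ι] (hab : ∀ i j, ⟪b j, a i⟫_ℂ ≠ 0) :
    kdSuperoperator a b 1 = 1 := by
  rw [kdSuperoperator_eq_diagonal_mul_kronecker, adjoint_one, map_one, map_one, transpose_one,
    one_kronecker_one]
  exact diagonal_similarity_one fun p => hab p.1 p.2

theorem kdSuperoperator_adjoint_apply (U : E →ₗ[ℂ] E) (p q : ι × ι) :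
    kdSuperoperator a b (adjoint U) p q =
      (‖kdOverlap a b p / kdOverlap a b q‖ : ℂ) ^ 2 * conj (kdSuperoperator a b U q p) := by
  simp only [kdSuperoperator, of_apply, map_mul, inner_conj_symm, ← inv_div (kdOverlap a b p),
    adjoint_inner_right, adjoint_adjoint]
  rw [← mul_assoc, ← mul_assoc, Complex.ofReal_norm_sq_mul_conj_inv]

end KirkwoodDirac

/-- For a unitary U, the KD superoperator of U† is the inverse of
that of U, and (Ê_{U†})_{ij,kl} = |⟨b_j|a_i⟩/⟨b_l|a_k⟩|² conj((Ê_U)_{kl,ij}). -/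
theorem kd_superoperator_inverse (d : ℕ)
    (a b : OrthonormalBasis (Fin d) ℂ (EuclideanSpace ℂ (Fin d)))
    (hab : ∀ i j, (inner ℂ (b j) (a i) : ℂ) ≠ 0)
    (U : EuclideanSpace ℂ (Fin d) →ₗ[ℂ] EuclideanSpace ℂ (Fin d))
    (hU : (LinearMap.adjoint U) ∘ₗ U = LinearMap.id ∧
          U ∘ₗ (LinearMap.adjoint U) = LinearMap.id)
    (EU EUdag : Matrix (Fin d × Fin d) (Fin d × Fin d) ℂ)
    (hEU : ∀ p q, EU p q =
      ((inner ℂ (b p.2) (a p.1) : ℂ) / (inner ℂ (b q.2) (a q.1) : ℂ)) *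
        (inner ℂ (a p.1) (U (a q.1)) : ℂ) *
        (inner ℂ (b q.2) ((LinearMap.adjoint U) (b p.2)) : ℂ))
    (hEUdag : ∀ p q, EUdag p q =
      ((inner ℂ (b p.2) (a p.1) : ℂ) / (inner ℂ (b q.2) (a q.1) : ℂ)) *
        (inner ℂ (a p.1) ((LinearMap.adjoint U) (a q.1)) : ℂ) *
        (inner ℂ (b q.2) (U (b p.2)) : ℂ)) :
    EUdag * EU = 1 ∧ EU * EUdag = 1 ∧
    ∀ p q, EUdag p q =
      ((‖(inner ℂ (b p.2) (a p.1) : ℂ) / (inner ℂ (b q.2) (a q.1) : ℂ)‖ : ℂ))^2 *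
        (starRingEnd ℂ) (EU q p) := by
  have hEU_eq : EU = kdSuperoperator a b U := Matrix.ext hEU
  have hEUdag_eq : EUdag = kdSuperoperator a b (adjoint U) := by
    ext p q
    rw [hEUdag, kdSuperoperator, of_apply, adjoint_adjoint]
    rfl
  subst hEU_eq hEUdag_eq
  refine ⟨?_, ?_, kdSuperoperator_adjoint_apply U⟩
  · rw [← kdSuperoperator_mul hab, Module.End.mul_eq_comp, hU.1, ← Module.End.one_eq_id,
      kdSuperoperator_one hab]
  · rw [← kdSuperoperator_mul hab, Module.End.mul_eq_comp, hU.2, ← Module.End.one_eq_id,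
      kdSuperoperator_one hab]
end

section
/- If the two bases are mutually unbiased (|⟨a_i|b_j⟩| = 1/√d for all i,j), then the Kirkwood-Dirac superoperator Ê_U of any unitary U is a unitary matrix on ℂ^{d²}. -/
open scoped InnerProductSpace Kronecker

/-!
Write `z (i, j) = ⟪b j, a i⟫`. Then `Ê_U = D (A ⊗ conj B) D⁻¹`, where `A` and `B` are the matrices
of `U` in the bases `a` and `b` (both unitary) and `D = diagonal z`. Mutual unbiasedness says that
all `z p` have the same nonzero modulus, so `D` is a scalar multiple of a unitary diagonal matrix
and conjugation by it preserves unitarity.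
-/

namespace Matrix

variable {ι 𝕜 : Type*} [Fintype ι] [DecidableEq ι] [RCLike 𝕜]

theorem diagonal_mem_unitaryGroup {w : ι → 𝕜} (hw : ∀ p, ‖w p‖ = 1) :
    diagonal w ∈ unitaryGroup ι 𝕜 := by
  rw [mem_unitaryGroup_iff', star_eq_conjTranspose, diagonal_conjTranspose, diagonal_mul_diagonal,
    ← diagonal_one]
  congr 1
  ext p
  simp [RCLike.conj_mul, hw p]

theorem of_div_mul_mem_unitaryGroup {z : ι → 𝕜} (hz₀ : ∀ p, z p ≠ 0)
    (hz : ∀ p q, ‖z p‖ = ‖z q‖) {M : Matrix ι ι 𝕜} (hM : M ∈ unitaryGroup ι 𝕜) :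
    of (fun p q ↦ z p / z q * M p q) ∈ unitaryGroup ι 𝕜 := by
  set w : ι → 𝕜 := fun p ↦ z p / ‖z p‖
  have hw : ∀ p, ‖w p‖ = 1 := fun p ↦ by simp [w, norm_ne_zero_iff.mpr (hz₀ p)]
  have hdiv : ∀ p q, z p / z q = w p * star (w q) := fun p q ↦ by
    have := RCLike.conj_mul (z q)
    simp only [w, star_div₀, RCLike.star_def, RCLike.conj_ofReal, hz p q]
    field_simp [hz₀ q, norm_ne_zero_iff.mpr (hz₀ q)]
    linear_combination -z p * this
  have hconj : of (fun p q ↦ z p / z q * M p q) = diagonal w * M * star (diagonal w) := by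
    ext p q
    simp only [of_apply, hdiv, star_eq_conjTranspose, diagonal_conjTranspose, mul_diagonal,
      diagonal_mul, Pi.star_apply, RCLike.star_def]
    ring
  rw [hconj]
  have hD := diagonal_mem_unitaryGroup hw
  exact mul_mem (mul_mem hD hM) (Unitary.star_mem hD)

end Matrix

section

variable {ι 𝕜 E : Type*} [Fintype ι] [DecidableEq ι] [RCLike 𝕜] [NormedAddCommGroup E]
  [InnerProductSpace 𝕜 E]

theorem LinearMap.toMatrix_mem_unitaryGroup_of_inner_map_map (b : OrthonormalBasis ι 𝕜 E)
    {U : E →ₗ[𝕜] E} (hU : ∀ x y, ⟪U x, U y⟫_𝕜 = ⟪x, y⟫_𝕜) :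
    LinearMap.toMatrix b.toBasis b.toBasis U ∈ Matrix.unitaryGroup ι 𝕜 := by
  rw [Matrix.mem_unitaryGroup_iff']
  ext k k'
  simp only [Matrix.mul_apply, Matrix.star_apply, LinearMap.toMatrix_apply,
    OrthonormalBasis.coe_toBasis, OrthonormalBasis.coe_toBasis_repr_apply,
    OrthonormalBasis.repr_apply_apply, RCLike.star_def, inner_conj_symm, b.sum_inner_mul_inner, hU,
    orthonormal_iff_ite.mp b.orthonormal, Matrix.one_apply]

end

/-- If the bases are mutually unbiased (|⟨a_i|b_j⟩| = 1/√d), then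
the KD superoperator Ê_U of any unitary U is a unitary d²×d² matrix. -/
theorem kd_superoperator_unitary_mub (d : ℕ)
    (a b : OrthonormalBasis (Fin d) ℂ (EuclideanSpace ℂ (Fin d)))
    (hmub : ∀ i j, ‖(inner ℂ (a i) (b j) : ℂ)‖ = 1 / Real.sqrt d)
    (U : EuclideanSpace ℂ (Fin d) →ₗ[ℂ] EuclideanSpace ℂ (Fin d))
    (hU : (LinearMap.adjoint U) ∘ₗ U = LinearMap.id ∧
          U ∘ₗ (LinearMap.adjoint U) = LinearMap.id)
    (EU : Matrix (Fin d × Fin d) (Fin d × Fin d) ℂ)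
    (hEU : ∀ p q, EU p q =
      ((inner ℂ (b p.2) (a p.1) : ℂ) / (inner ℂ (b q.2) (a q.1) : ℂ)) *
        (inner ℂ (a p.1) (U (a q.1)) : ℂ) *
        (inner ℂ (b q.2) ((LinearMap.adjoint U) (b p.2)) : ℂ)) :
    EU ∈ Matrix.unitaryGroup (Fin d × Fin d) ℂ := by
  have hiso : ∀ x y, ⟪U x, U y⟫_ℂ = ⟪x, y⟫_ℂ := fun x y ↦ by
    rw [← LinearMap.adjoint_inner_right, ← LinearMap.comp_apply, hU.1, LinearMap.id_apply]
  have hkron : EU = Matrix.of fun p q ↦ ⟪b p.2, a p.1⟫_ℂ / ⟪b q.2, a q.1⟫_ℂ *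
      (LinearMap.toMatrix a.toBasis a.toBasis U ⊗ₖ
        (LinearMap.toMatrix b.toBasis b.toBasis U).map star) p q := by
    ext p q
    simp only [hEU, Matrix.of_apply, Matrix.kroneckerMap_apply, Matrix.map_apply,
      LinearMap.toMatrix_apply, OrthonormalBasis.coe_toBasis,
      OrthonormalBasis.coe_toBasis_repr_apply, OrthonormalBasis.repr_apply_apply,
      LinearMap.adjoint_inner_right, RCLike.star_def, inner_conj_symm, mul_assoc]
  have hz₀ : ∀ p : Fin d × Fin d, ⟪b p.2, a p.1⟫_ℂ ≠ 0 := fun p ↦ by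
    rw [← norm_ne_zero_iff, ← inner_conj_symm, RCLike.norm_conj, hmub]
    have : 0 < d := Fin.pos p.1
    positivity
  have hA := LinearMap.toMatrix_mem_unitaryGroup_of_inner_map_map a hiso
  have hB := LinearMap.toMatrix_mem_unitaryGroup_of_inner_map_map b hiso
  refine hkron ▸ Matrix.of_div_mul_mem_unitaryGroup hz₀ (fun p q ↦ ?_) ?_
  · simp only [← inner_conj_symm (b _), RCLike.norm_conj, hmub]
  · exact Matrix.kronecker_mem_unitary hA (Matrix.map_star_mem_unitaryGroup_iff.mpr hB)
end

section
/- If a unitary U induces a Kirkwood-Dirac superoperator Ê_U (with respect to bases A, B with all mutual overlaps nonzero) that is a left stochastic matrix (entrywise real non-negative with unit column sums), then Ê_U is a permutation matrix. -/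
/-!
The Kirkwood–Dirac matrices form a representation, `Ê_V Ê_U = Ê_{VU}` and `Ê_id = 1`, so
`Ê_{U†}` inverts `Ê_U`; moreover the entries of `Ê_{U†}` are non-negative multiples of the
conjugated entries of the transpose of `Ê_U`. A column-stochastic matrix with a non-negative
left inverse `N` is a permutation matrix: if `M k q ≠ 0`, then `(N M) i q = 0` for `i ≠ q`
forces column `k` of `N` to be supported at `q`, column sums pass from `M` to `N`, and so
column `q` of `M = N⁻¹` is the standard basis vector `e_k`.
-/

open scoped InnerProductSpace ComplexConjugate ComplexOrder

namespace Matrix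

variable {R n : Type*} [Fintype n] [DecidableEq n]

section OrderedSemiring

variable [Semiring R] [PartialOrder R] [IsOrderedRing R]

lemma mem_colStochastic_of_mul_eq_one {M N : Matrix n n R} (hM : M ∈ colStochastic R n)
    (hN : ∀ i j, 0 ≤ N i j) (h : M * N = 1) : N ∈ colStochastic R n :=
  ⟨hN, calc 1 ᵥ* N = (1 ᵥ* M) ᵥ* N := by rw [one_vecMul_of_mem_colStochastic hM]
    _ = 1 := by rw [vecMul_vecMul, h, vecMul_one]⟩

lemma eq_zero_of_mul_eq_one_of_nonneg [NoZeroDivisors R] {M N : Matrix n n R}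
    (hM : ∀ i j, 0 ≤ M i j) (hN : ∀ i j, 0 ≤ N i j) (h : N * M = 1) {k q : n}
    (hkq : M k q ≠ 0) {i : n} (hiq : i ≠ q) : N i k = 0 := by
  have hsum : ∑ r, N i r * M r q = 0 := by
    rw [← mul_apply, h, one_apply_ne hiq]
  have hk := (Finset.sum_eq_zero_iff_of_nonneg fun r _ => mul_nonneg (hN i r) (hM r q)).1 hsum
    k (Finset.mem_univ k)
  exact (mul_eq_zero.1 hk).resolve_right hkq

end OrderedSemiring

variable [CommRing R] [PartialOrder R] [IsOrderedRing R] [NoZeroDivisors R] [Nontrivial R]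

lemma exists_col_eq_single_of_nonneg_inverse {M N : Matrix n n R} (hM : M ∈ colStochastic R n)
    (hN : ∀ i j, 0 ≤ N i j) (h : N * M = 1) (q : n) :
    ∃ k, ∀ i, M i q = if i = k then 1 else 0 := by
  have h' : M * N = 1 := mul_eq_one_comm.1 h
  obtain ⟨k, -, hkq⟩ := Finset.exists_ne_zero_of_sum_ne_zero
    ((sum_col_of_mem_colStochastic hM q).symm ▸ one_ne_zero : ∑ i, M i q ≠ 0)
  have hNk : ∀ i, i ≠ q → N i k = 0 := fun i =>
    eq_zero_of_mul_eq_one_of_nonneg hM.1 hN h hkq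
  have hNqk : N q k = 1 := by
    rw [← sum_col_of_mem_colStochastic (mem_colStochastic_of_mul_eq_one hM hN h') k,
      Finset.sum_eq_single q (fun i _ => hNk i) (by simp)]
  refine ⟨k, fun i => ?_⟩
  rw [← one_apply, ← h', mul_apply, Finset.sum_eq_single q
    (fun r _ hr => by rw [hNk r hr, mul_zero]) (by simp), hNqk, mul_one]

lemma exists_perm_of_mem_colStochastic_of_nonneg_inverse {M N : Matrix n n R}
    (hM : M ∈ colStochastic R n) (hN : ∀ i j, 0 ≤ N i j) (h : N * M = 1) :
    ∃ σ : Equiv.Perm n, ∀ i j, M i j = if i = σ j then 1 else 0 := by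
  choose σ hσ using exists_col_eq_single_of_nonneg_inverse hM hN h
  have hinj : Function.Injective σ := by
    intro q q' hqq'
    by_contra hne
    have hcols : (N * M) q q' = (N * M) q q := by simp only [mul_apply, hσ, hqq']
    rw [h, one_apply_ne hne, one_apply_eq] at hcols
    exact zero_ne_one hcols
  exact ⟨Equiv.ofBijective σ (Finite.injective_iff_bijective.1 hinj), fun i j => hσ j i⟩

end Matrix

lemma RCLike.div_eq_norm_sq_div_mul_conj_div {𝕜 : Type*} [RCLike 𝕜] (z w : 𝕜) :
    z / w = ((‖z‖ ^ 2 / ‖w‖ ^ 2 : ℝ) : 𝕜) * (conj w / conj z) := by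
  rcases eq_or_ne z 0 with rfl | hz
  · simp
  rcases eq_or_ne w 0 with rfl | hw
  · simp
  have hz' : conj z ≠ 0 := by simpa using hz
  have hw' : conj w ≠ 0 := by simpa using hw
  rw [RCLike.ofReal_div, RCLike.ofReal_pow, RCLike.ofReal_pow, ← RCLike.mul_conj,
    ← RCLike.mul_conj]
  field_simp

open LinearMap

variable {𝕜 E ι κ : Type*} [RCLike 𝕜] [NormedAddCommGroup E] [InnerProductSpace 𝕜 E]
  [FiniteDimensional 𝕜 E] [Fintype ι] [Fintype κ]

/-- The Kirkwood–Dirac superoperator `Ê_U`, indexed by pairs `(i, j)` for `(a i, b j)`. -/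
noncomputable def kdMatrix (a : OrthonormalBasis ι 𝕜 E) (b : OrthonormalBasis κ 𝕜 E)
    (U : E →ₗ[𝕜] E) : Matrix (ι × κ) (ι × κ) 𝕜 := Matrix.of fun p q =>
  ⟪b p.2, a p.1⟫_𝕜 / ⟪b q.2, a q.1⟫_𝕜 * ⟪a p.1, U (a q.1)⟫_𝕜 * ⟪b q.2, adjoint U (b p.2)⟫_𝕜

variable (a : OrthonormalBasis ι 𝕜 E) (b : OrthonormalBasis κ 𝕜 E)

@[simp]
lemma kdMatrix_apply (U : E →ₗ[𝕜] E) (p q : ι × κ) :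
    kdMatrix a b U p q =
      ⟪b p.2, a p.1⟫_𝕜 / ⟪b q.2, a q.1⟫_𝕜 * ⟪a p.1, U (a q.1)⟫_𝕜 * ⟪b q.2, adjoint U (b p.2)⟫_𝕜 :=
  rfl

lemma kdMatrix_mul (hab : ∀ i j, ⟪b j, a i⟫_𝕜 ≠ 0) (V U : E →ₗ[𝕜] E) :
    kdMatrix a b V * kdMatrix a b U = kdMatrix a b (V ∘ₗ U) := by
  ext p q
  have hterm : ∀ r : ι × κ, kdMatrix a b V p r * kdMatrix a b U r q =
      ⟪b p.2, a p.1⟫_𝕜 / ⟪b q.2, a q.1⟫_𝕜 *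
        ((⟪adjoint V (a p.1), a r.1⟫_𝕜 * ⟪a r.1, U (a q.1)⟫_𝕜) *
          (⟪U (b q.2), b r.2⟫_𝕜 * ⟪b r.2, adjoint V (b p.2)⟫_𝕜)) := by
    intro r
    simp only [kdMatrix_apply, adjoint_inner_left, adjoint_inner_right]
    field_simp [hab r.1 r.2]
  rw [Matrix.mul_apply, Finset.sum_congr rfl fun r _ => hterm r, ← Finset.mul_sum]
  simp only [Fintype.sum_prod_type]
  rw [← Finset.sum_mul_sum, a.sum_inner_mul_inner, b.sum_inner_mul_inner]
  simp only [kdMatrix_apply, adjoint_inner_left, adjoint_inner_right, adjoint_comp, comp_apply]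
  ring

lemma kdMatrix_id [DecidableEq ι] [DecidableEq κ] (hab : ∀ i j, ⟪b j, a i⟫_𝕜 ≠ 0) :
    kdMatrix a b LinearMap.id = 1 := by
  ext p q
  simp only [kdMatrix_apply, adjoint_id, id_apply, a.inner_eq_ite, b.inner_eq_ite,
    Matrix.one_apply]
  by_cases hpq : p = q
  · subst hpq
    simp [hab]
  · have hne : p.1 ≠ q.1 ∨ q.2 ≠ p.2 := by
      contrapose! hpq
      exact Prod.ext hpq.1 hpq.2.symm
    rcases hne with h | h <;> simp [h, hpq]

lemma kdMatrix_adjoint_apply (U : E →ₗ[𝕜] E) (p q : ι × κ) :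
    kdMatrix a b (adjoint U) p q =
      ((‖⟪b p.2, a p.1⟫_𝕜‖ ^ 2 / ‖⟪b q.2, a q.1⟫_𝕜‖ ^ 2 : ℝ) : 𝕜) * conj (kdMatrix a b U q p) := by
  rw [kdMatrix_apply, kdMatrix_apply, RCLike.div_eq_norm_sq_div_mul_conj_div]
  simp only [map_mul, map_div₀, inner_conj_symm, adjoint_adjoint, adjoint_inner_right]
  ring

lemma kdMatrix_adjoint_nonneg {U : E →ₗ[𝕜] E} (hU : ∀ p q, 0 ≤ kdMatrix a b U p q)
    (p q : ι × κ) : 0 ≤ kdMatrix a b (adjoint U) p q := by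
  rw [kdMatrix_adjoint_apply]
  exact mul_nonneg (RCLike.ofReal_nonneg.2 (by positivity)) (star_nonneg_iff.2 (hU q p))

/-- If a unitary U induces a KD superoperator Ê_U that is a left
stochastic matrix, then Ê_U is a permutation matrix. -/
theorem kd_stochastic_implies_permutation (d : ℕ)
    (a b : OrthonormalBasis (Fin d) ℂ (EuclideanSpace ℂ (Fin d)))
    (hab : ∀ i j, (inner ℂ (b j) (a i) : ℂ) ≠ 0)
    (U : EuclideanSpace ℂ (Fin d) →ₗ[ℂ] EuclideanSpace ℂ (Fin d))
    (hU : (LinearMap.adjoint U) ∘ₗ U = LinearMap.id ∧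
          U ∘ₗ (LinearMap.adjoint U) = LinearMap.id)
    (EU : Matrix (Fin d × Fin d) (Fin d × Fin d) ℂ)
    (hEU : ∀ p q, EU p q =
      ((inner ℂ (b p.2) (a p.1) : ℂ) / (inner ℂ (b q.2) (a q.1) : ℂ)) *
        (inner ℂ (a p.1) (U (a q.1)) : ℂ) *
        (inner ℂ (b q.2) ((LinearMap.adjoint U) (b p.2)) : ℂ))
    (hreal : ∀ p q, (EU p q).im = 0 ∧ 0 ≤ (EU p q).re)
    (hcol : ∀ q, ∑ p, EU p q = 1) :
    ∃ π : Equiv.Perm (Fin d × Fin d),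
      ∀ p q, EU p q = if p = π q then 1 else 0 := by
  obtain rfl : EU = kdMatrix a b U := Matrix.ext hEU
  have hnonneg : ∀ p q, 0 ≤ kdMatrix a b U p q := fun p q =>
    Complex.nonneg_iff.2 ⟨(hreal p q).2, (hreal p q).1.symm⟩
  refine Matrix.exists_perm_of_mem_colStochastic_of_nonneg_inverse
    (Matrix.mem_colStochastic_iff_sum.2 ⟨hnonneg, hcol⟩) (kdMatrix_adjoint_nonneg a b hnonneg) ?_
  rw [kdMatrix_mul a b hab, hU.1, kdMatrix_id a b hab]
end

section
/- A generalized permutation unitary (one acting as U|a_i⟩ = e^{iθ_i}|a_{σ(i)}⟩ and U|b_j⟩ = e^{iφ_j}|b_{τ(j)}⟩) preserves Kirkwood-Dirac positivity: if Q_{ij}(ρ) is real non-negative for all i,j, then so is Q_{ij}(UρU†). -/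
/-!
Conjugation by a unitary `U` does not change the Kirkwood–Dirac value `⟪y, x⟫ ⟪x, ρ y⟫` once
`x` and `y` are moved along with it: `Q(UρU†)` at `(U x, U y)` equals `Q(ρ)` at `(x, y)`.
Rescaling `x` and `y` by `α` and `β` multiplies the value by `|α|² |β|²`, so unimodular phases
drop out. Since `U` maps `a i` and `b j` to phase multiples of `a (σ i)` and `b (τ j)`, the
entry `Q_{σ i, τ j}(UρU†)` is `Q_{i j}(ρ)`; as `σ` and `τ` are bijections, this covers every entry.
-/

open scoped InnerProductSpace

section KirkwoodDirac

variable {𝕜 E : Type*} [RCLike 𝕜] [NormedAddCommGroup E] [InnerProductSpace 𝕜 E]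

/-- `Q_{ij}(ρ) = kirkwoodDirac ρ (a i) (b j)`. -/
def kirkwoodDirac (ρ : E →ₗ[𝕜] E) (x y : E) : 𝕜 := ⟪y, x⟫_𝕜 * ⟪x, ρ y⟫_𝕜

theorem kirkwoodDirac_smul_smul (ρ : E →ₗ[𝕜] E) (x y : E) (α β : 𝕜) :
    kirkwoodDirac ρ (α • x) (β • y) = ((‖α‖ ^ 2 * ‖β‖ ^ 2 : ℝ) : 𝕜) * kirkwoodDirac ρ x y := by
  simp only [kirkwoodDirac, map_smul, inner_smul_left, inner_smul_right]
  push_cast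
  rw [← RCLike.conj_mul α, ← RCLike.conj_mul β]
  ring

theorem kirkwoodDirac_smul_smul_of_norm_eq_one (ρ : E →ₗ[𝕜] E) (x y : E) {α β : 𝕜}
    (hα : ‖α‖ = 1) (hβ : ‖β‖ = 1) :
    kirkwoodDirac ρ (α • x) (β • y) = kirkwoodDirac ρ x y := by
  rw [kirkwoodDirac_smul_smul, hα, hβ]
  norm_num

theorem kirkwoodDirac_conj_apply [FiniteDimensional 𝕜 E] (ρ : E →ₗ[𝕜] E) {U : E →ₗ[𝕜] E}
    (hU : LinearMap.adjoint U ∘ₗ U = LinearMap.id) (x y : E) :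
    kirkwoodDirac (U ∘ₗ ρ ∘ₗ LinearMap.adjoint U) (U x) (U y) = kirkwoodDirac ρ x y := by
  have hUU (z : E) : LinearMap.adjoint U (U z) = z := LinearMap.congr_fun hU z
  simp only [kirkwoodDirac, LinearMap.comp_apply, ← LinearMap.adjoint_inner_left, hUU]

end KirkwoodDirac

/-- A generalized permutation unitary preserves KD positivity:
if Q_{ij}(ρ) is real non-negative for all i,j, so is Q_{ij}(UρU†). -/
theorem kd_generalized_permutation_preserves_positivity (d : ℕ)
    (a b : OrthonormalBasis (Fin d) ℂ (EuclideanSpace ℂ (Fin d)))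
    (U ρ : EuclideanSpace ℂ (Fin d) →ₗ[ℂ] EuclideanSpace ℂ (Fin d))
    (hU : (LinearMap.adjoint U) ∘ₗ U = LinearMap.id ∧
          U ∘ₗ (LinearMap.adjoint U) = LinearMap.id)
    (σ τ : Equiv.Perm (Fin d)) (θ φ : Fin d → ℝ)
    (hUa : ∀ i, U (a i) = Complex.exp (θ i * Complex.I) • a (σ i))
    (hUb : ∀ j, U (b j) = Complex.exp (φ j * Complex.I) • b (τ j))
    (hQpos : ∀ i j,
      ((inner ℂ (b j) (a i) : ℂ) * (inner ℂ (a i) (ρ (b j)) : ℂ)).im = 0 ∧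
      0 ≤ ((inner ℂ (b j) (a i) : ℂ) * (inner ℂ (a i) (ρ (b j)) : ℂ)).re) :
    ∀ i j,
      ((inner ℂ (b j) (a i) : ℂ) *
        (inner ℂ (a i) (U (ρ ((LinearMap.adjoint U) (b j)))) : ℂ)).im = 0 ∧
      0 ≤ ((inner ℂ (b j) (a i) : ℂ) *
        (inner ℂ (a i) (U (ρ ((LinearMap.adjoint U) (b j)))) : ℂ)).re := by
  have hQ (i j : Fin d) : kirkwoodDirac (U ∘ₗ ρ ∘ₗ LinearMap.adjoint U) (a (σ i)) (b (τ j)) =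
      kirkwoodDirac ρ (a i) (b j) := by
    rw [← kirkwoodDirac_conj_apply ρ hU.1, hUa, hUb,
      kirkwoodDirac_smul_smul_of_norm_eq_one _ _ _ (Complex.norm_exp_ofReal_mul_I _)
        (Complex.norm_exp_ofReal_mul_I _)]
  intro i j
  obtain ⟨i, rfl⟩ := σ.surjective i
  obtain ⟨j, rfl⟩ := τ.surjective j
  have hQij := hQ i j
  simp only [kirkwoodDirac, LinearMap.comp_apply] at hQij
  exact hQij ▸ hQpos i j
end

section
/- Hermiticity of ρ imposes the constraints Q_{uv}(ρ) = ∑_{i,j} (⟨a_i|b_v⟩⟨b_v|a_u⟩⟨a_u|b_j⟩ / ⟨a_i|b_j⟩) · conj(Q_{ij}(ρ)) on any informationally complete Kirkwood-Dirac distribution of a Hermitian operator. -/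
/-!
Conjugating a Kirkwood–Dirac entry of a Hermitian `ρ` gives `⟨a_i|b_j⟩⟨b_j|ρ|a_i⟩`, i.e. the
entry with the order of the two projectors reversed. Dividing out the (nonzero) overlap
`⟨a_i|b_j⟩` leaves matrix elements of `ρ`, and two resolutions of the identity, over `B` and then
over `A`, reassemble `⟨b_v|a_u⟩⟨a_u|ρ|b_v⟩ = Q_{uv}`.
-/

open Finset
open scoped InnerProductSpace ComplexConjugate

variable {ι 𝕜 E : Type*} [Fintype ι] [RCLike 𝕜] [NormedAddCommGroup E] [InnerProductSpace 𝕜 E]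

noncomputable def kdQuasiprob (a b : OrthonormalBasis ι 𝕜 E) (ρ : E →ₗ[𝕜] E) (i j : ι) : 𝕜 :=
  ⟪b j, a i⟫_𝕜 * ⟪a i, ρ (b j)⟫_𝕜

lemma LinearMap.IsSymmetric.conj_kdQuasiprob {ρ : E →ₗ[𝕜] E} (hρ : ρ.IsSymmetric)
    (a b : OrthonormalBasis ι 𝕜 E) (i j : ι) :
    conj (kdQuasiprob a b ρ i j) = ⟪a i, b j⟫_𝕜 * ⟪b j, ρ (a i)⟫_𝕜 := by
  rw [kdQuasiprob, map_mul, inner_conj_symm, inner_conj_symm, hρ]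

lemma OrthonormalBasis.inner_map_eq_sum {F : Type*} [NormedAddCommGroup F] [InnerProductSpace 𝕜 F]
    (a : OrthonormalBasis ι 𝕜 E) (T : E →ₗ[𝕜] F) (x : E) (y : F) :
    ⟪y, T x⟫_𝕜 = ∑ i, ⟪y, T (a i)⟫_𝕜 * ⟪a i, x⟫_𝕜 := by
  conv_lhs => rw [← a.sum_repr' x]
  simp only [map_sum, map_smul, inner_sum, inner_smul_right, mul_comm]

lemma kdQuasiprob_eq_sum_conj (a b : OrthonormalBasis ι 𝕜 E) {ρ : E →ₗ[𝕜] E}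
    (hρ : ρ.IsSymmetric) (hab : ∀ i j, ⟪a i, b j⟫_𝕜 ≠ 0) (u v : ι) :
    kdQuasiprob a b ρ u v = ∑ i, ∑ j,
      ⟪a i, b v⟫_𝕜 * ⟪b v, a u⟫_𝕜 * ⟪a u, b j⟫_𝕜 / ⟪a i, b j⟫_𝕜 *
        conj (kdQuasiprob a b ρ i j) := by
  calc kdQuasiprob a b ρ u v
      = ⟪b v, a u⟫_𝕜 * ∑ i, (∑ j, ⟪a u, b j⟫_𝕜 * ⟪b j, ρ (a i)⟫_𝕜) * ⟪a i, b v⟫_𝕜 := by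
        simp only [kdQuasiprob, a.inner_map_eq_sum ρ (b v), b.sum_inner_mul_inner]
    _ = _ := by
        simp only [mul_sum, sum_mul, hρ.conj_kdQuasiprob]
        refine sum_congr rfl fun i _ => sum_congr rfl fun j _ => ?_
        field_simp [hab i j]

/-- Hermiticity of ρ imposes the constraints
Q_{uv} = ∑_{i,j} (⟨a_i|b_v⟩⟨b_v|a_u⟩⟨a_u|b_j⟩/⟨a_i|b_j⟩) conj(Q_{ij}). -/
theorem kd_hermiticity_constraints (d : ℕ)
    (a b : OrthonormalBasis (Fin d) ℂ (EuclideanSpace ℂ (Fin d)))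
    (hab : ∀ i j, (inner ℂ (a i) (b j) : ℂ) ≠ 0)
    (ρ : EuclideanSpace ℂ (Fin d) →ₗ[ℂ] EuclideanSpace ℂ (Fin d))
    (hρ : LinearMap.adjoint ρ = ρ) :
    ∀ u v : Fin d,
      (inner ℂ (b v) (a u) : ℂ) * (inner ℂ (a u) (ρ (b v)) : ℂ)
      = ∑ i, ∑ j,
          ((inner ℂ (a i) (b v) : ℂ) * (inner ℂ (b v) (a u) : ℂ) *
            (inner ℂ (a u) (b j) : ℂ) / (inner ℂ (a i) (b j) : ℂ)) *
          (starRingEnd ℂ)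
            ((inner ℂ (b j) (a i) : ℂ) * (inner ℂ (a i) (ρ (b j)) : ℂ)) :=
  kdQuasiprob_eq_sum_conj a b ((ρ.isSymmetric_iff_isSelfAdjoint).2 hρ) hab
end

section
/- For a single qudit of dimension d with B the discrete Fourier transform of the computational basis A (so ⟨a|b⟩ entries are d^{-1/2}ω^{ab}, ω = e^{2πi/d}), the discrete Fourier transform Q̂(x,y) = ∑_{a,b∈ℤ_d} ω^{-ax-by} Q(a,b) of the KD distribution of a Hermitian ρ satisfies the self-similarity relation Q̂(d−x, d−y) = ω^{xy} · conj(Q̂(x,y)) (indices mod d). -/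
/-!
Summing over `b` first, orthogonality of the characters `b ↦ ω^{b(k-a-y)}` collapses the double
Fourier sum of the Kirkwood–Dirac distribution to a single diagonal sum
`Q̂(x,y) = ∑ₐ ω^{-ax} ρ_{a,a+y}`. Conjugating this sum, using `ρ_{a+y,a} = conj ρ_{a,a+y}`,
and shifting `a ↦ a + y` gives the self-similarity.
-/

open Finset

namespace AddChar

variable {R : Type*} [CommRing R] [Fintype R] (ψ : AddChar R ℂ)

theorem star_apply_eq_apply_neg (z : R) : star (ψ z) = ψ (-z) :=
  (map_neg_eq_conj ψ z).symm

theorem sum_fourier_kirkwoodDirac_eq (hψ : ψ.IsPrimitive) (f : R → ℂ) {c : ℂ}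
    (hc : star c * c = (Fintype.card R : ℂ)⁻¹) (a x y : R) :
    ∑ b, (ψ (a * x + b * y))⁻¹ * (star (c * ψ (a * b)) * ∑ k, f k * (c * ψ (k * b))) =
      ψ (-(a * x)) * f (a + y) := by
  classical
  have hsummand : ∀ b,
      (ψ (a * x + b * y))⁻¹ * (star (c * ψ (a * b)) * ∑ k, f k * (c * ψ (k * b))) =
        star c * c * ψ (-(a * x)) * ∑ k, f k * ψ (b * (k - (a + y))) := by
    intro b
    rw [← map_neg_eq_inv, star_mul', star_apply_eq_apply_neg, mul_sum, mul_sum, mul_sum]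
    refine sum_congr rfl fun k _ => ?_
    have hphase : ψ (-(a * x + b * y)) * ψ (-(a * b)) * ψ (k * b) =
        ψ (-(a * x)) * ψ (b * (k - (a + y))) := by
      simp only [← map_add_eq_mul]
      ring_nf
    linear_combination (star c * c * f k) * hphase
  simp_rw [hsummand, ← mul_sum]
  rw [sum_comm]
  simp_rw [← mul_sum, sum_mulShift _ hψ, sub_eq_zero]
  simp only [Nat.cast_ite, Nat.cast_zero, mul_ite, mul_zero, sum_ite_eq', mem_univ, if_true, hc]
  field_simp

theorem sum_mul_diag_neg_neg_eq_mul_star {ρ : Matrix R R ℂ} (hρ : ρ.IsHermitian)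
    (x y : R) :
    ∑ a, ψ (-(a * -x)) * ρ a (a + -y) =
      ψ (x * y) * star (∑ a, ψ (-(a * x)) * ρ a (a + y)) := by
  rw [star_sum, mul_sum]
  refine (Fintype.sum_equiv (Equiv.addRight y) _ _ fun a => ?_).symm
  rw [star_mul', star_apply_eq_apply_neg, hρ.apply, ← mul_assoc,
    ← map_add_eq_mul, Equiv.coe_addRight, add_neg_cancel_right]
  ring_nf

end AddChar

/-- For a qudit with B the Fourier basis, the DFT of the KD
distribution of a Hermitian ρ satisfies the self-similarity relation
Q̂(d−x, d−y) = ω^{xy} conj(Q̂(x,y)) (indices mod d, so d−x is −x in ZMod d). -/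
theorem kd_dft_self_similarity (d : ℕ) [NeZero d]
    (ω : ℂ) (hω : ω = Complex.exp (2 * Real.pi * Complex.I / d))
    (ρ : Matrix (ZMod d) (ZMod d) ℂ) (hρ : ρ.IsHermitian)
    (bvec : ZMod d → ZMod d → ℂ)
    (hb : ∀ j k, bvec j k = ((Real.sqrt d : ℂ))⁻¹ * ω ^ ((k * j : ZMod d)).val)
    (Q : ZMod d → ZMod d → ℂ)
    (hQ : ∀ i j, Q i j = star (bvec j i) * ∑ k, ρ i k * bvec j k)
    (Qhat : ZMod d → ZMod d → ℂ)
    (hQhat : ∀ x y, Qhat x y = ∑ a : ZMod d, ∑ b : ZMod d,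
      (ω ^ ((a * x + b * y : ZMod d)).val)⁻¹ * Q a b) :
    ∀ x y : ZMod d,
      Qhat (-x) (-y) = ω ^ ((x * y : ZMod d)).val * star (Qhat x y) := by
  intro x y
  have hprim : IsPrimitiveRoot ω d := hω ▸ Complex.isPrimitiveRoot_exp d (NeZero.ne d)
  let ψ := AddChar.zmodChar d hprim.pow_eq_one
  have hψ_prim : ψ.IsPrimitive := AddChar.zmodChar_primitive_of_primitive_root d hprim
  have hψ : ∀ z : ZMod d, ω ^ z.val = ψ z := fun z => (AddChar.zmodChar_apply _ z).symm
  have hc : star ((Real.sqrt d : ℂ))⁻¹ * ((Real.sqrt d : ℂ))⁻¹ =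
      (Fintype.card (ZMod d) : ℂ)⁻¹ := by
    rw [ZMod.card, star_inv₀, Complex.star_def, Complex.conj_ofReal, ← mul_inv,
      ← Complex.ofReal_mul, Real.mul_self_sqrt (Nat.cast_nonneg d), Complex.ofReal_natCast]
  have hQhat_diag : ∀ x y, Qhat x y = ∑ a, ψ (-(a * x)) * ρ a (a + y) := fun x y => by
    simp only [hQhat, hQ, hb, hψ, ψ.sum_fourier_kirkwoodDirac_eq hψ_prim (ρ _) hc]
  rw [hQhat_diag, hQhat_diag, hψ]
  exact ψ.sum_mul_diag_neg_neg_eq_mul_star hρ x y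
end

section
/- For any pure state |ψ⟩, each Kirkwood-Dirac quasiprobability satisfies |Q_{ij}(ψ)| ≤ M³ √(n_A n_B), where M = max_{i,j}|⟨a_i|b_j⟩| and n_A, n_B are the numbers of basis vectors of A and B not orthogonal to |ψ⟩. -/
/-!
Expanding `⟨a_i|ψ⟩` in the basis `B` involves only the `n_B` indices `j` with `⟨b_j|ψ⟩ ≠ 0`.
Each coefficient `⟨a_i|b_j⟩` is at most `M` in modulus, and by Cauchy–Schwarz and Parseval the
`n_B` nonzero `|⟨b_j|ψ⟩|` sum to at most `√n_B`; so `|⟨a_i|ψ⟩| ≤ M √n_B`. Symmetrically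
`|⟨ψ|b_j⟩| ≤ M √n_A`, and the third factor `|⟨b_j|a_i⟩|` is at most `M`.
-/

namespace OrthonormalBasis

open Finset Real
open scoped InnerProductSpace

variable {ι 𝕜 E : Type*} [Fintype ι] [RCLike 𝕜] [NormedAddCommGroup E] [InnerProductSpace 𝕜 E]

theorem sum_norm_inner_le_sqrt_card_mul_norm (b : OrthonormalBasis ι 𝕜 E) (x : E)
    (s : Finset ι) : ∑ j ∈ s, ‖⟪b j, x⟫_𝕜‖ ≤ √(#s) * ‖x‖ := by
  rw [← Real.sqrt_sq (norm_nonneg x), ← Real.sqrt_mul (Nat.cast_nonneg _),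
    Real.le_sqrt (by positivity) (by positivity)]
  calc (∑ j ∈ s, ‖⟪b j, x⟫_𝕜‖) ^ 2 ≤ #s * ∑ j ∈ s, ‖⟪b j, x⟫_𝕜‖ ^ 2 := sq_sum_le_card_mul_sum_sq
    _ ≤ #s * ‖x‖ ^ 2 := by
      rw [← b.sum_sq_norm_inner_right x]
      exact mul_le_mul_of_nonneg_left
        (sum_le_sum_of_subset_of_nonneg (subset_univ s) fun _ _ _ => by positivity) (by positivity)

theorem inner_eq_sum_inner_mul_inner_support (b : OrthonormalBasis ι 𝕜 E) (v x : E) :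
    ⟪v, x⟫_𝕜 = ∑ j with ⟪b j, x⟫_𝕜 ≠ 0, ⟪v, b j⟫_𝕜 * ⟪b j, x⟫_𝕜 := by
  rw [sum_filter_of_ne fun _ _ => right_ne_zero_of_mul, b.sum_inner_mul_inner]

theorem norm_inner_le_mul_sqrt_card_support_mul_norm (b : OrthonormalBasis ι 𝕜 E)
    {v : E} {M : ℝ} (hM : ∀ j, ‖⟪v, b j⟫_𝕜‖ ≤ M) (x : E) :
    ‖⟪v, x⟫_𝕜‖ ≤ M * √(#{j | ⟪b j, x⟫_𝕜 ≠ 0}) * ‖x‖ := by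
  set s : Finset ι := {j | ⟪b j, x⟫_𝕜 ≠ 0}
  obtain hs | ⟨j, -⟩ := s.eq_empty_or_nonempty
  · simp [b.inner_eq_sum_inner_mul_inner_support v x, s, hs]
  have hM0 : 0 ≤ M := (norm_nonneg _).trans (hM j)
  calc ‖⟪v, x⟫_𝕜‖ ≤ ∑ j ∈ s, ‖⟪v, b j⟫_𝕜‖ * ‖⟪b j, x⟫_𝕜‖ := by
        rw [b.inner_eq_sum_inner_mul_inner_support v x]
        exact (norm_sum_le _ _).trans_eq (sum_congr rfl fun _ _ => norm_mul _ _)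
    _ ≤ ∑ j ∈ s, M * ‖⟪b j, x⟫_𝕜‖ := by gcongr with j; exact hM j
    _ ≤ M * √(#s) * ‖x‖ := by
      rw [← mul_sum, mul_assoc]
      exact mul_le_mul_of_nonneg_left (b.sum_norm_inner_le_sqrt_card_mul_norm x s) hM0

end OrthonormalBasis

/-- For any pure state ψ, each KD quasiprobability satisfies
|Q_{ij}(ψ)| ≤ M³ √(n_A n_B), with M = max_{ij}|⟨a_i|b_j⟩| and n_A, n_B the
support uncertainties of ψ. -/
theorem kd_magnitude_bound (d : ℕ)
    (a b : OrthonormalBasis (Fin d) ℂ (EuclideanSpace ℂ (Fin d)))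
    (ψ : EuclideanSpace ℂ (Fin d)) (hψ : ‖ψ‖ = 1)
    (M : ℝ)
    (hM : IsGreatest {x : ℝ | ∃ i j, x = ‖(inner ℂ (a i) (b j) : ℂ)‖} M)
    (nA nB : ℕ)
    (hnA : nA = (Finset.univ.filter fun i => (inner ℂ (a i) ψ : ℂ) ≠ 0).card)
    (hnB : nB = (Finset.univ.filter fun j => (inner ℂ (b j) ψ : ℂ) ≠ 0).card) :
    ∀ i j,
      ‖(inner ℂ (b j) (a i) : ℂ) * (inner ℂ (a i) ψ : ℂ) * (inner ℂ ψ (b j) : ℂ)‖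
        ≤ M ^ 3 * Real.sqrt (nA * nB) := by
  intro i j
  have hab : ∀ i j, ‖inner ℂ (a i) (b j)‖ ≤ M := fun i j => hM.2 ⟨i, j, rfl⟩
  have hM0 : 0 ≤ M := (norm_nonneg _).trans (hab i j)
  have hai : ‖inner ℂ (a i) ψ‖ ≤ M * Real.sqrt nB := by
    simpa [hψ, hnB] using b.norm_inner_le_mul_sqrt_card_support_mul_norm (hab i) ψ
  have hbj : ‖inner ℂ ψ (b j)‖ ≤ M * Real.sqrt nA := by
    have hba : ∀ i, ‖inner ℂ (b j) (a i)‖ ≤ M := fun i =>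
      (norm_inner_symm (𝕜 := ℂ) _ _).trans_le (hab i j)
    simpa [hψ, hnA, norm_inner_symm ψ] using a.norm_inner_le_mul_sqrt_card_support_mul_norm hba ψ
  calc ‖inner ℂ (b j) (a i) * inner ℂ (a i) ψ * inner ℂ ψ (b j)‖
      = ‖inner ℂ (a i) (b j)‖ * ‖inner ℂ (a i) ψ‖ * ‖inner ℂ ψ (b j)‖ := by
        rw [norm_mul, norm_mul, norm_inner_symm]
    _ ≤ M * (M * Real.sqrt nB) * (M * Real.sqrt nA) := by gcongr; exact hab i j
    _ = M ^ 3 * Real.sqrt (nA * nB) := by rw [Real.sqrt_mul (Nat.cast_nonneg _)]; ring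
end

section
/- If A and B are mutually unbiased bases (|⟨a_i|b_j⟩| = 1/√d), |ψ⟩ is a pure state whose KD distribution is positive (all Q_{ij} real ≥ 0) with support uncertainties satisfying n_A n_B = d, then every non-zero quasiprobability equals exactly 1/d. -/
/-!
Positivity makes every quasiprobability equal to its modulus, and for mutually unbiased bases
that modulus factorises: `Q i j = c α i β j` with `c = 1/√d`, `α i = |⟨a i|ψ⟩|`,
`β j = |⟨b j|ψ⟩|`. The marginals of the Kirkwood–Dirac distribution are `α i ²` and `β j ²`,
so on the supports `α i = c ∑ β` and `β j = c ∑ α`, while summing all entries gives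
`c (∑ α)(∑ β) = 1`. Hence every non-zero entry is `c³ (∑ α)(∑ β) = c² = 1/d`.
-/

open Finset ComplexConjugate
open scoped InnerProductSpace ComplexOrder

theorem mul_mul_eq_sq_of_marginals {K ι κ : Type*} [Field K] [Fintype ι] [Fintype κ]
    {c : K} {α : ι → K} {β : κ → K}
    (hrow : ∀ i, ∑ j, c * α i * β j = α i ^ 2) (hcol : ∀ j, ∑ i, c * α i * β j = β j ^ 2)
    (hβ : ∑ j, β j ^ 2 = 1) {i : ι} {j : κ} (hi : α i ≠ 0) (hj : β j ≠ 0) :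
    c * α i * β j = c ^ 2 := by
  have hcol' : ∀ j, c * (∑ i, α i) * β j = β j ^ 2 := fun j => by
    rw [← hcol j, mul_sum, sum_mul]
  have hrow' : c * α i * ∑ j, β j = α i ^ 2 := by rw [mul_sum, hrow i]
  have hαi : α i = c * ∑ j, β j := mul_left_cancel₀ hi (by linear_combination -hrow')
  have hβj : β j = c * ∑ i, α i := mul_left_cancel₀ hj (by linear_combination -(hcol' j))
  have htotal : c * (∑ i, α i) * ∑ j, β j = 1 := by
    rw [← hβ, mul_sum]; exact sum_congr rfl fun j _ => hcol' j
  rw [hαi, hβj]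
  linear_combination c ^ 2 * htotal

section KirkwoodDirac

variable {ι κ E : Type*} [NormedAddCommGroup E] [InnerProductSpace ℂ E]

noncomputable def kdDistribution (a : ι → E) (b : κ → E) (ψ : E) (i : ι) (j : κ) : ℂ :=
  ⟪b j, a i⟫_ℂ * ⟪a i, ψ⟫_ℂ * ⟪ψ, b j⟫_ℂ

theorem sum_kdDistribution_right [Fintype κ] (a : ι → E) (b : OrthonormalBasis κ ℂ E) (ψ : E)
    (i : ι) :
    ∑ j, kdDistribution a b ψ i j = (‖⟪a i, ψ⟫_ℂ‖ : ℂ) ^ 2 :=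
  calc ∑ j, kdDistribution a b ψ i j = ⟪a i, ψ⟫_ℂ * ∑ j, ⟪ψ, b j⟫_ℂ * ⟪b j, a i⟫_ℂ := by
        rw [mul_sum]; exact sum_congr rfl fun j _ => by rw [kdDistribution]; ring
    _ = ⟪a i, ψ⟫_ℂ * conj ⟪a i, ψ⟫_ℂ := by rw [b.sum_inner_mul_inner, inner_conj_symm]
    _ = (‖⟪a i, ψ⟫_ℂ‖ : ℂ) ^ 2 := Complex.mul_conj' _

theorem sum_kdDistribution_left [Fintype ι] (a : OrthonormalBasis ι ℂ E) (b : κ → E) (ψ : E)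
    (j : κ) :
    ∑ i, kdDistribution a b ψ i j = (‖⟪b j, ψ⟫_ℂ‖ : ℂ) ^ 2 := by
  simp only [kdDistribution]
  rw [← sum_mul, a.sum_inner_mul_inner, ← inner_conj_symm ψ (b j), Complex.mul_conj']

theorem kdDistribution_eq_of_nonneg {a : ι → E} {b : κ → E} {ψ : E} {c : ℝ} {i : ι} {j : κ}
    (hnonneg : 0 ≤ kdDistribution a b ψ i j) (hab : ‖⟪b j, a i⟫_ℂ‖ = c) :
    kdDistribution a b ψ i j = c * ‖⟪a i, ψ⟫_ℂ‖ * ‖⟪b j, ψ⟫_ℂ‖ := by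
  rw [Complex.eq_coe_norm_of_nonneg hnonneg, kdDistribution, norm_mul, norm_mul, hab,
    norm_inner_symm ψ, Complex.ofReal_mul, Complex.ofReal_mul]

end KirkwoodDirac

theorem kd_mub_uniform_general (d : ℕ)
    (a b : OrthonormalBasis (Fin d) ℂ (EuclideanSpace ℂ (Fin d)))
    (hmub : ∀ i j, ‖(inner ℂ (a i) (b j) : ℂ)‖ = 1 / Real.sqrt d)
    (ψ : EuclideanSpace ℂ (Fin d)) (hψ : ‖ψ‖ = 1)
    (hQpos : ∀ i j,
      ((inner ℂ (b j) (a i) : ℂ) * (inner ℂ (a i) ψ : ℂ) * (inner ℂ ψ (b j) : ℂ)).im = 0 ∧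
      0 ≤ ((inner ℂ (b j) (a i) : ℂ) * (inner ℂ (a i) ψ : ℂ) * (inner ℂ ψ (b j) : ℂ)).re) :
    ∀ i j,
      (inner ℂ (b j) (a i) : ℂ) * (inner ℂ (a i) ψ : ℂ) * (inner ℂ ψ (b j) : ℂ) ≠ 0 →
      (inner ℂ (b j) (a i) : ℂ) * (inner ℂ (a i) ψ : ℂ) * (inner ℂ ψ (b j) : ℂ)
        = 1 / (d : ℂ) := by
  intro i j hne
  set c : ℝ := 1 / Real.sqrt d with hc_def
  have hQ : ∀ i j, kdDistribution a b ψ i j = c * ‖⟪a i, ψ⟫_ℂ‖ * ‖⟪b j, ψ⟫_ℂ‖ := fun i j =>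
    kdDistribution_eq_of_nonneg (Complex.nonneg_iff.2 ⟨(hQpos i j).2, (hQpos i j).1.symm⟩)
      (by rw [norm_inner_symm, hmub])
  have hβ : ∑ j, (‖⟪b j, ψ⟫_ℂ‖ : ℂ) ^ 2 = 1 := by
    exact_mod_cast (b.sum_sq_norm_inner_right ψ).trans (by rw [hψ, one_pow])
  have hc : (c : ℂ) ^ 2 = 1 / d := by
    rw [hc_def, ← Complex.ofReal_pow, div_pow, one_pow, Real.sq_sqrt d.cast_nonneg,
      Complex.ofReal_div, Complex.ofReal_one, Complex.ofReal_natCast]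
  have hrow : ∀ i, ∑ j, (c : ℂ) * ‖⟪a i, ψ⟫_ℂ‖ * ‖⟪b j, ψ⟫_ℂ‖ = (‖⟪a i, ψ⟫_ℂ‖ : ℂ) ^ 2 :=
    fun i => by simp_rw [← hQ]; exact sum_kdDistribution_right ..
  have hcol : ∀ j, ∑ i, (c : ℂ) * ‖⟪a i, ψ⟫_ℂ‖ * ‖⟪b j, ψ⟫_ℂ‖ = (‖⟪b j, ψ⟫_ℂ‖ : ℂ) ^ 2 :=
    fun j => by simp_rw [← hQ]; exact sum_kdDistribution_left ..
  change kdDistribution a b ψ i j ≠ 0 at hne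
  change kdDistribution a b ψ i j = _
  rw [hQ] at hne ⊢
  rw [mul_mul_eq_sq_of_marginals hrow hcol hβ (right_ne_zero_of_mul (left_ne_zero_of_mul hne))
    (right_ne_zero_of_mul hne), hc]

/-- On mutually unbiased bases, if the KD distribution of a pure
state ψ is positive and n_A n_B = d, then every non-zero quasiprobability
equals 1/d. -/
theorem kd_mub_uniform (d : ℕ)
    (a b : OrthonormalBasis (Fin d) ℂ (EuclideanSpace ℂ (Fin d)))
    (hmub : ∀ i j, ‖(inner ℂ (a i) (b j) : ℂ)‖ = 1 / Real.sqrt d)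
    (ψ : EuclideanSpace ℂ (Fin d)) (hψ : ‖ψ‖ = 1)
    (hQpos : ∀ i j,
      ((inner ℂ (b j) (a i) : ℂ) * (inner ℂ (a i) ψ : ℂ) * (inner ℂ ψ (b j) : ℂ)).im = 0 ∧
      0 ≤ ((inner ℂ (b j) (a i) : ℂ) * (inner ℂ (a i) ψ : ℂ) * (inner ℂ ψ (b j) : ℂ)).re)
    (hsupp : (Finset.univ.filter fun i => (inner ℂ (a i) ψ : ℂ) ≠ 0).card *
             (Finset.univ.filter fun j => (inner ℂ (b j) ψ : ℂ) ≠ 0).card = d) :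
    ∀ i j,
      (inner ℂ (b j) (a i) : ℂ) * (inner ℂ (a i) ψ : ℂ) * (inner ℂ ψ (b j) : ℂ) ≠ 0 →
      (inner ℂ (b j) (a i) : ℂ) * (inner ℂ (a i) ψ : ℂ) * (inner ℂ ψ (b j) : ℂ)
        = 1 / (d : ℂ) :=
  kd_mub_uniform_general d a b hmub ψ hψ hQpos
end

section
/- For any two pure states |ψ⟩, |φ⟩ and an informationally complete KD distribution, |⟨ψ|φ⟩|² = ∑_{i,j} conj(Q_{ij}(ψ)) Q_{ij}(φ) / |⟨a_i|b_j⟩|². -/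
/-!
Expanding `⟨ψ|φ⟩⟨φ|ψ⟩` through the completeness relations `∑ᵢ |aᵢ⟩⟨aᵢ| = 1 = ∑ⱼ |bⱼ⟩⟨bⱼ|` gives
`∑ᵢⱼ ⟨ψ|aᵢ⟩⟨aᵢ|φ⟩⟨φ|bⱼ⟩⟨bⱼ|ψ⟩`, and since
`conj(Qᵢⱼ(ψ)) Qᵢⱼ(φ) = |⟨aᵢ|bⱼ⟩|² ⟨ψ|aᵢ⟩⟨aᵢ|φ⟩⟨φ|bⱼ⟩⟨bⱼ|ψ⟩`, each summand is recovered by dividing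
by the nonzero `|⟨aᵢ|bⱼ⟩|²`.
-/

open ComplexConjugate

variable {E : Type*} [NormedAddCommGroup E] [InnerProductSpace ℂ E]

lemma ofReal_norm_inner_sq (x y : E) :
    ((‖(inner ℂ x y : ℂ)‖ : ℂ)) ^ 2 = inner ℂ x y * inner ℂ y x := by
  rw [← inner_conj_symm y x, Complex.mul_conj']

lemma conj_kd_mul_kd_div_norm_inner_sq {a b : E} (hab : (inner ℂ a b : ℂ) ≠ 0) (ψ φ : E) :
    conj (inner ℂ b a * inner ℂ a ψ * inner ℂ ψ b) * (inner ℂ b a * inner ℂ a φ * inner ℂ φ b) /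
        ((‖(inner ℂ a b : ℂ)‖ : ℂ)) ^ 2
      = inner ℂ ψ a * inner ℂ a φ * (inner ℂ φ b * inner ℂ b ψ) := by
  have hba : (inner ℂ b a : ℂ) ≠ 0 := by rwa [← inner_conj_symm, map_ne_zero]
  rw [ofReal_norm_inner_sq, div_eq_iff (mul_ne_zero hab hba)]
  simp only [map_mul, inner_conj_symm]
  ring

theorem kd_overlap_formula_general (d : ℕ)
    (a b : OrthonormalBasis (Fin d) ℂ (EuclideanSpace ℂ (Fin d)))
    (hab : ∀ i j, (inner ℂ (a i) (b j) : ℂ) ≠ 0)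
    (ψ φ : EuclideanSpace ℂ (Fin d)) :
    ((‖(inner ℂ ψ φ : ℂ)‖ : ℂ))^2
      = ∑ i, ∑ j,
          (starRingEnd ℂ)
            ((inner ℂ (b j) (a i) : ℂ) * (inner ℂ (a i) ψ : ℂ) * (inner ℂ ψ (b j) : ℂ)) *
          ((inner ℂ (b j) (a i) : ℂ) * (inner ℂ (a i) φ : ℂ) * (inner ℂ φ (b j) : ℂ)) /
          ((‖(inner ℂ (a i) (b j) : ℂ)‖ : ℂ))^2 := by
  calc ((‖(inner ℂ ψ φ : ℂ)‖ : ℂ))^2 = inner ℂ ψ φ * inner ℂ φ ψ := ofReal_norm_inner_sq ψ φ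
    _ = (∑ i, inner ℂ ψ (a i) * inner ℂ (a i) φ) * ∑ j, inner ℂ φ (b j) * inner ℂ (b j) ψ := by
      rw [a.sum_inner_mul_inner, b.sum_inner_mul_inner]
    _ = ∑ i, ∑ j, inner ℂ ψ (a i) * inner ℂ (a i) φ * (inner ℂ φ (b j) * inner ℂ (b j) ψ) :=
      Finset.sum_mul_sum _ _ _ _
    _ = _ := Finset.sum_congr rfl fun i _ => Finset.sum_congr rfl fun j _ =>
      (conj_kd_mul_kd_div_norm_inner_sq (hab i j) ψ φ).symm

/-- For pure states ψ, φ and an informationally complete KD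
distribution, |⟨ψ|φ⟩|² = ∑_{ij} conj(Q_{ij}(ψ)) Q_{ij}(φ) / |⟨a_i|b_j⟩|². -/
theorem kd_overlap_formula (d : ℕ)
    (a b : OrthonormalBasis (Fin d) ℂ (EuclideanSpace ℂ (Fin d)))
    (hab : ∀ i j, (inner ℂ (a i) (b j) : ℂ) ≠ 0)
    (ψ φ : EuclideanSpace ℂ (Fin d)) (hψ : ‖ψ‖ = 1) (hφ : ‖φ‖ = 1) :
    ((‖(inner ℂ ψ φ : ℂ)‖ : ℂ))^2
      = ∑ i, ∑ j,
          (starRingEnd ℂ)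
            ((inner ℂ (b j) (a i) : ℂ) * (inner ℂ (a i) ψ : ℂ) * (inner ℂ ψ (b j) : ℂ)) *
          ((inner ℂ (b j) (a i) : ℂ) * (inner ℂ (a i) φ : ℂ) * (inner ℂ φ (b j) : ℂ)) /
          ((‖(inner ℂ (a i) (b j) : ℂ)‖ : ℂ))^2 :=
  kd_overlap_formula_general d a b hab ψ φ
end
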